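/- arXiv:2310.12891 — 5 statements merged into one kernel-verified Lean document; each statement's English description precedes it below -/
import Mathlib

section
/- Let H = (V, E) be a hypergraph with |V| ≥ 4 and V ∉ E, and suppose that for every set F ⊆ E of hyperedges, |⋃_{e ∈ F} e| ≥ Σ_{e ∈ F} (|e| - 1). Then there exists a set W ⊆ V with |W| ≤ 2 such that the graph obtained from the 2-section of H by deleting the vertices of W is disconnected. -/
/-- The 2-section of a hypergraph with hyperedge set `E`. -/
def twoSection {V : Type*} (E : Finset (Finset V)) : SimpleGraph V :=
  SimpleGraph.fromRel (fun u v => ∃ e ∈ E, u ∈ e ∧ v ∈ e)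

open Finset

private lemma walk_closed {α : Type*} {G : SimpleGraph α} {P : α → Prop}
    (hP : ∀ x y, P x → G.Adj x y → P y) :
    ∀ {a b : α}, G.Walk a b → P a → P b := by
  intro a b w
  induction w with
  | nil => exact id
  | cons h p ih => exact fun ha => ih (hP _ _ ha h)

private lemma key_bound {α : Type*} [DecidableEq α] :
    ∀ (n : ℕ) (F : Finset (Finset α)), F.card ≤ n →
    (∀ F' ⊆ F, F'.Nonempty → (F \ F').Nonempty →
      ((F'.biUnion id) ∩ ((F \ F').biUnion id)).Nonempty) →
    (F.biUnion id).card ≤ 1 + ∑ e ∈ F, (e.card - 1) := by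
  intro n
  induction n with
  | zero =>
    intro F hF _
    have : F = ∅ := card_eq_zero.mp (Nat.le_zero.mp hF)
    subst this; simp
  | succ n ih =>
    intro F hF hconn
    rcases lt_or_ge F.card 2 with h2 | h2
    · interval_cases h : F.card
      · have : F = ∅ := card_eq_zero.mp h
        subst this; simp
      · obtain ⟨e, rfl⟩ := card_eq_one.mp h
        simp only [singleton_biUnion, id, sum_singleton]
        omega
    · have hFne : F.Nonempty := card_pos.mp (by omega)
      obtain ⟨e, he⟩ := hFne
      have hFe : (F \ {e}).Nonempty := by
        apply card_pos.mp
        rw [card_sdiff_of_subset (singleton_subset_iff.mpr he), card_singleton]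
        omega
      obtain ⟨x, hx⟩ := hconn {e} (singleton_subset_iff.mpr he) ⟨e, mem_singleton_self e⟩ hFe
      rw [mem_inter] at hx
      have hxe : x ∈ e := by simpa using hx.1
      obtain ⟨e', he'sd, hxe'⟩ := mem_biUnion.mp hx.2
      rw [mem_sdiff, mem_singleton] at he'sd
      obtain ⟨he'F, hne'⟩ := he'sd
      simp only [id] at hxe'
      set u := e ∪ e' with hu
      set D := (F.erase e).erase e' with hD
      set F2 := insert u D with hF2
      have heD : e ∉ D := by
        intro h
        exact (mem_erase.mp (mem_of_mem_erase h)).1 rfl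
      have he'D : e' ∉ D := fun h => (mem_erase.mp h).1 rfl
      have hDF : D ⊆ F := (erase_subset _ _).trans (erase_subset _ _)
      have he'Fe : e' ∈ F.erase e := mem_erase.mpr ⟨hne', he'F⟩
      have hDcard : D.card = F.card - 2 := by
        rw [hD, card_erase_of_mem he'Fe, card_erase_of_mem he]
        omega
      have hFDu : ∀ f ∈ F, f ∉ D → f = e ∨ f = e' := by
        intro f hfF hfD
        by_cases h1 : f = e'
        · right; exact h1
        · left
          by_contra h2
          exact hfD (mem_erase.mpr ⟨h1, mem_erase.mpr ⟨h2, hfF⟩⟩)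
      have hbu : F2.biUnion id = F.biUnion id := by
        apply Subset.antisymm
        · intro z hz
          obtain ⟨f, hf, hzf⟩ := mem_biUnion.mp hz
          rcases mem_insert.mp hf with rfl | hfD
          · rcases mem_union.mp hzf with h | h
            · exact mem_biUnion.mpr ⟨e, he, h⟩
            · exact mem_biUnion.mpr ⟨e', he'F, h⟩
          · exact mem_biUnion.mpr ⟨f, hDF hfD, hzf⟩
        · intro z hz
          obtain ⟨f, hfF, hzf⟩ := mem_biUnion.mp hz
          by_cases hfD : f ∈ D
          · exact mem_biUnion.mpr ⟨f, mem_insert_of_mem hfD, hzf⟩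
          · rcases hFDu f hfF hfD with rfl | rfl
            · exact mem_biUnion.mpr ⟨u, mem_insert_self _ _, mem_union_left _ hzf⟩
            · exact mem_biUnion.mpr ⟨u, mem_insert_self _ _, mem_union_right _ hzf⟩
      have hF2card : F2.card ≤ n := by
        have h := card_insert_le u D
        rw [← hF2] at h
        omega
      have hlift : ∀ A B : Finset (Finset α), A ∪ B = F2 → Disjoint A B → u ∈ A →
          B.Nonempty → ((A.biUnion id) ∩ (B.biUnion id)).Nonempty := by
        intro A B hABu hABd huA hB
        have hBD : B ⊆ D := by
          intro b hb
          have hbF2 : b ∈ F2 := hABu ▸ mem_union_right _ hb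
          rcases mem_insert.mp hbF2 with rfl | h
          · exact absurd hb (disjoint_left.mp hABd huA)
          · exact h
        have hBF : B ⊆ F := hBD.trans hDF
        have hFB : (F \ B).Nonempty := ⟨e, mem_sdiff.mpr ⟨he, fun h => heD (hBD h)⟩⟩
        obtain ⟨y, hy⟩ := hconn B hBF hB hFB
        rw [mem_inter] at hy
        obtain ⟨f, hf, hyf⟩ := mem_biUnion.mp hy.2
        rw [mem_sdiff] at hf
        have hyA : y ∈ A.biUnion id := by
          by_cases hfD : f ∈ D
          · have hfF2 : f ∈ F2 := mem_insert_of_mem hfD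
            rcases mem_union.mp (hABu ▸ hfF2 : f ∈ A ∪ B) with hfA | hfB
            · exact mem_biUnion.mpr ⟨f, hfA, hyf⟩
            · exact absurd hfB hf.2
          · rcases hFDu f hf.1 hfD with rfl | rfl
            · exact mem_biUnion.mpr ⟨u, huA, mem_union_left _ hyf⟩
            · exact mem_biUnion.mpr ⟨u, huA, mem_union_right _ hyf⟩
        exact ⟨y, mem_inter.mpr ⟨hyA, hy.1⟩⟩
      have hconn2 : ∀ F' ⊆ F2, F'.Nonempty → (F2 \ F').Nonempty →
          ((F'.biUnion id) ∩ ((F2 \ F').biUnion id)).Nonempty := by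
        intro F' hsub h1 h2
        have hABu : F' ∪ (F2 \ F') = F2 := union_sdiff_of_subset hsub
        have hABd : Disjoint F' (F2 \ F') := disjoint_sdiff
        by_cases huF' : u ∈ F'
        · exact hlift F' (F2 \ F') hABu hABd huF' h2
        · have huB : u ∈ F2 \ F' := mem_sdiff.mpr ⟨mem_insert_self _ _, huF'⟩
          obtain ⟨y, hy⟩ := hlift (F2 \ F') F' (by rw [union_comm]; exact hABu) hABd.symm huB h1
          rw [mem_inter] at hy
          exact ⟨y, mem_inter.mpr ⟨hy.2, hy.1⟩⟩
      have hmain := ih F2 hF2card hconn2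
      have hsum1 : ∑ f ∈ F.erase e, (f.card - 1) + (e.card - 1) = ∑ f ∈ F, (f.card - 1) :=
        sum_erase_add _ _ he
      have hsum2 : ∑ f ∈ D, (f.card - 1) + (e'.card - 1) = ∑ f ∈ F.erase e, (f.card - 1) :=
        sum_erase_add _ _ he'Fe
      have hsumF2 : ∑ f ∈ F2, (f.card - 1) ≤ (u.card - 1) + ∑ f ∈ D, (f.card - 1) := by
        by_cases hu' : u ∈ D
        · rw [hF2, insert_eq_self.mpr hu']
          exact Nat.le_add_left _ _
        · rw [hF2, sum_insert hu']
      have hcardu : u.card + (e ∩ e').card = e.card + e'.card := card_union_add_card_inter e e'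
      have hinter : 1 ≤ (e ∩ e').card := card_pos.mpr ⟨x, mem_inter.mpr ⟨hxe, hxe'⟩⟩
      have hce : 1 ≤ e.card := card_pos.mpr ⟨x, hxe⟩
      have hce' : 1 ≤ e'.card := card_pos.mpr ⟨x, hxe'⟩
      rw [← hbu]
      omega

theorem stmt1 {V : Type*} [Fintype V] [DecidableEq V] (E : Finset (Finset V))
    (hne : ∀ e ∈ E, e.Nonempty)
    (hV : 4 ≤ Fintype.card V)
    (hfull : Finset.univ ∉ E)
    (hsparse : ∀ F ⊆ E, ∑ e ∈ F, (e.card - 1) ≤ (F.biUnion id).card) :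
    ∃ W : Finset V, W.card ≤ 2 ∧
      ¬ ((twoSection E).induce {v : V | v ∉ W}).Connected := by
  classical
  set G := twoSection E with hG
  have hadj_of : ∀ {x y : V} {e : Finset V}, e ∈ E → x ∈ e → y ∈ e → x ≠ y → G.Adj x y := by
    intro x y e heE hxe hye hxy
    rw [hG, twoSection, SimpleGraph.fromRel_adj]
    exact ⟨hxy, Or.inl ⟨e, heE, hxe, hye⟩⟩
  have hedge_of : ∀ {x y : V}, G.Adj x y → ∃ e ∈ E, x ∈ e ∧ y ∈ e := by
    intro x y h
    rw [hG, twoSection, SimpleGraph.fromRel_adj] at h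
    rcases h.2 with ⟨e, heE, h1, h2⟩ | ⟨e, heE, h1, h2⟩
    exacts [⟨e, heE, h1, h2⟩, ⟨e, heE, h2, h1⟩]
  by_cases hcov : ∀ v : V, ∃ e ∈ E, v ∈ e
  case neg =>
    push_neg at hcov
    obtain ⟨v, hv⟩ := hcov
    refine ⟨∅, by simp, ?_⟩
    intro hc
    have hnt : Nontrivial V := Fintype.one_lt_card_iff_nontrivial.mp (by omega)
    obtain ⟨b, hb⟩ := exists_ne v
    have hmv : v ∈ {x : V | x ∉ (∅ : Finset V)} := by simp
    have hmb : b ∈ {x : V | x ∉ (∅ : Finset V)} := by simp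
    obtain ⟨w⟩ := hc.preconnected ⟨v, hmv⟩ ⟨b, hmb⟩
    have hcl : ∀ x y : ↥{x : V | x ∉ (∅ : Finset V)}, (↑x = v) →
        (G.induce {x : V | x ∉ (∅ : Finset V)}).Adj x y → (↑y = v) := by
      intro x y hx hxy
      have hGxy : G.Adj ↑x ↑y := hxy
      rw [hx] at hGxy
      obtain ⟨e, heE, h1, _⟩ := hedge_of hGxy
      exact absurd h1 (hv e heE)
    exact hb (walk_closed hcl w rfl)
  case pos =>
  by_cases hbig : ∃ e0 ∈ E, 3 ≤ e0.card
  · -- Case A : a big hyperedge exists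
    obtain ⟨e0, he0E, he0c⟩ := hbig
    have hs0 : ∃ s0 : V, s0 ∉ e0 := by
      by_contra h
      push_neg at h
      exact hfull ((eq_univ_iff_forall.mpr h) ▸ he0E)
    obtain ⟨s0, hs0e0⟩ := hs0
    set st : V → V → Prop := fun a b => G.Adj a b ∧ a ∉ e0 ∧ b ∉ e0 with hst
    have hstsymm : Symmetric st := fun a b h => ⟨h.1.symm, h.2.2, h.2.1⟩
    set K := univ.filter (fun x => Relation.ReflTransGen st s0 x ∧ x ∉ e0) with hK
    have hs0K : s0 ∈ K := mem_filter.mpr ⟨mem_univ _, Relation.ReflTransGen.refl, hs0e0⟩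
    have hKe0 : ∀ x ∈ K, x ∉ e0 := fun x hx => (mem_filter.mp hx).2.2
    have hKR : ∀ x ∈ K, Relation.ReflTransGen st s0 x := fun x hx => (mem_filter.mp hx).2.1
    have hKclose : ∀ x ∈ K, ∀ y, G.Adj x y → y ∉ e0 → y ∈ K := by
      intro x hx y hxy hy
      exact mem_filter.mpr ⟨mem_univ _, (hKR x hx).tail ⟨hxy, hKe0 x hx, hy⟩, hy⟩
    set FK := E.filter (fun e => (e ∩ K).Nonempty) with hFK
    have hFKE : FK ⊆ E := filter_subset _ _
    have hf1 : ∀ e ∈ FK, ∀ z ∈ e, z ∉ e0 → z ∈ K := by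
      intro e heFK z hze hz0
      obtain ⟨k, hk⟩ := (mem_filter.mp heFK).2
      rw [mem_inter] at hk
      by_cases hzk : z = k
      · rw [hzk]; exact hk.2
      · exact hKclose k hk.2 z
          (hadj_of (hFKE heFK) hk.1 hze (fun h => hzk h.symm)) hz0
    have he0FK : e0 ∉ FK := by
      intro h
      obtain ⟨k, hk⟩ := (mem_filter.mp h).2
      rw [mem_inter] at hk
      exact hKe0 k hk.2 hk.1
    have hf2 : ∑ e ∈ FK, (e.card - 1) ≤ K.card + 1 := by
      have hsub : insert e0 FK ⊆ E := insert_subset he0E hFKE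
      have h1 := hsparse _ hsub
      have hbU : (insert e0 FK).biUnion id ⊆ e0 ∪ K := by
        intro z hz
        obtain ⟨e, he, hze⟩ := mem_biUnion.mp hz
        rcases mem_insert.mp he with rfl | heFK
        · exact mem_union_left _ hze
        · by_cases hz0 : z ∈ e0
          · exact mem_union_left _ hz0
          · exact mem_union_right _ (hf1 e heFK z hze hz0)
      have h2 : ((insert e0 FK).biUnion id).card ≤ e0.card + K.card :=
        (card_le_card hbU).trans (card_union_le _ _)
      rw [sum_insert he0FK] at h1
      omega
    have hf3 : ∀ F' ⊆ FK, F'.Nonempty → (FK \ F').Nonempty →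
        ((F'.biUnion id) ∩ ((FK \ F').biUnion id)).Nonempty := by
      intro F' hsub h1 h2
      by_contra hcon
      rw [not_nonempty_iff_eq_empty] at hcon
      have hdis : ∀ z : V, z ∈ F'.biUnion id → z ∈ (FK \ F').biUnion id → False := by
        intro z hz1 hz2
        have : z ∈ (∅ : Finset V) := hcon ▸ mem_inter.mpr ⟨hz1, hz2⟩
        simp at this
      obtain ⟨e1, he1⟩ := h1
      obtain ⟨e2, he2⟩ := h2
      obtain ⟨k1, hk1⟩ := (mem_filter.mp (hsub he1)).2
      obtain ⟨k2, hk2⟩ := (mem_filter.mp ((mem_sdiff.mp he2).1)).2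
      rw [mem_inter] at hk1 hk2
      have hRsymm : ∀ {a b : V}, Relation.ReflTransGen st a b → Relation.ReflTransGen st b a :=
        fun h => (@Relation.ReflTransGen.stdSymm _ _ ⟨fun a b h => hstsymm h⟩).symm _ _ h
      have hR12 : Relation.ReflTransGen st k1 k2 :=
        (hRsymm (hKR k1 hk1.2)).trans (hKR k2 hk2.2)
      have hclaim : ∀ x : V, Relation.ReflTransGen st k1 x → x ∈ F'.biUnion id := by
        intro x hR
        induction hR with
        | refl => exact mem_biUnion.mpr ⟨e1, he1, hk1.1⟩
        | @tail p q hR' hstpq ih =>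
          obtain ⟨e, heE, hpe, hqe⟩ := hedge_of hstpq.1
          have hpK : p ∈ K :=
            mem_filter.mpr ⟨mem_univ _, (hKR k1 hk1.2).trans hR', hstpq.2.1⟩
          have heFK : e ∈ FK := mem_filter.mpr ⟨heE, ⟨p, mem_inter.mpr ⟨hpe, hpK⟩⟩⟩
          by_cases heF' : e ∈ F'
          · exact mem_biUnion.mpr ⟨e, heF', hqe⟩
          · exact absurd (hdis p ih (mem_biUnion.mpr ⟨e, mem_sdiff.mpr ⟨heFK, heF'⟩, hpe⟩)) id
      exact absurd (hdis k2 (hclaim k2 hR12) (mem_biUnion.mpr ⟨e2, he2, hk2.1⟩)) id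
    have hKsub : K ⊆ FK.biUnion id := by
      intro k hk
      obtain ⟨e, heE, hke⟩ := hcov k
      exact mem_biUnion.mpr ⟨e, mem_filter.mpr ⟨heE, ⟨k, mem_inter.mpr ⟨hke, hk⟩⟩⟩, hke⟩
    set A := e0 ∩ FK.biUnion id with hA
    have hAdisjK : Disjoint A K := by
      rw [disjoint_left]
      intro a haA haK
      exact hKe0 a haK (mem_inter.mp haA).1
    have hAcard : A.card ≤ 2 := by
      have hsubAK : A ∪ K ⊆ FK.biUnion id := union_subset inter_subset_right hKsub
      have h1 : (A ∪ K).card = A.card + K.card := card_union_of_disjoint hAdisjK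
      have h2 : (A ∪ K).card ≤ (FK.biUnion id).card := card_le_card hsubAK
      have h3 := key_bound FK.card FK le_rfl hf3
      omega
    have hbex : ∃ b ∈ e0, b ∉ A := by
      by_contra h
      push_neg at h
      have hsub : e0 ⊆ A := h
      have := card_le_card hsub
      omega
    obtain ⟨b, hbe0, hbA⟩ := hbex
    refine ⟨A, hAcard, ?_⟩
    intro hc
    have hmv : s0 ∈ {x : V | x ∉ A} := fun h => hs0e0 (mem_inter.mp h).1
    have hmb : b ∈ {x : V | x ∉ A} := hbA
    obtain ⟨w⟩ := hc.preconnected ⟨s0, hmv⟩ ⟨b, hmb⟩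
    have hcl : ∀ x y : ↥{x : V | x ∉ A}, (↑x ∈ K) →
        (G.induce {x : V | x ∉ A}).Adj x y → (↑y ∈ K) := by
      intro x y hx hxy
      have hGxy : G.Adj ↑x ↑y := hxy
      by_cases hy0 : (↑y : V) ∈ e0
      · exfalso
        obtain ⟨e, heE, hxe, hye⟩ := hedge_of hGxy
        have heFK : e ∈ FK := mem_filter.mpr ⟨heE, ⟨↑x, mem_inter.mpr ⟨hxe, hx⟩⟩⟩
        exact y.2 (mem_inter.mpr ⟨hy0, mem_biUnion.mpr ⟨e, heFK, hye⟩⟩)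
      · exact hKclose _ hx _ hGxy hy0
    have hbK : b ∈ K := walk_closed hcl w hs0K
    exact hKe0 b hbK hbe0
  · -- Case B : all hyperedges have ≤ 2 vertices
    push_neg at hbig
    set E2 := E.filter (fun e => e.card = 2) with hE2
    have hE2sub : E2 ⊆ E := filter_subset _ _
    have hE2card : E2.card ≤ Fintype.card V := by
      have h1 : E2.card = ∑ e ∈ E2, (e.card - 1) := by
        rw [card_eq_sum_ones]
        exact sum_congr rfl (fun e he => by rw [(mem_filter.mp he).2])
      have h2 : ∑ e ∈ E2, (e.card - 1) ≤ ∑ e ∈ E, (e.card - 1) :=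
        sum_le_sum_of_subset hE2sub
      have h3 := hsparse E (Finset.Subset.refl E)
      have h4 : (E.biUnion id).card ≤ Fintype.card V := by
        rw [← card_univ]
        exact card_le_univ _
      omega
    have hmin : ∃ v : V, (E2.filter (fun e => v ∈ e)).card ≤ 2 := by
      by_contra hno
      push_neg at hno
      have hdouble : ∑ v : V, (E2.filter (fun e => v ∈ e)).card = ∑ e ∈ E2, e.card := by
        calc ∑ v : V, (E2.filter (fun e => v ∈ e)).card
            = ∑ v : V, ∑ e ∈ E2, (if v ∈ e then 1 else 0) :=
              sum_congr rfl (fun v _ => card_filter _ _)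
          _ = ∑ e ∈ E2, ∑ v : V, (if v ∈ e then 1 else 0) := sum_comm
          _ = ∑ e ∈ E2, e.card := sum_congr rfl (fun e _ => by simp)
      have h3 : 3 * Fintype.card V ≤ ∑ v : V, (E2.filter (fun e => v ∈ e)).card := by
        calc 3 * Fintype.card V = ∑ _v : V, 3 := by
              rw [sum_const, card_univ, smul_eq_mul, mul_comm]
          _ ≤ ∑ v : V, (E2.filter (fun e => v ∈ e)).card :=
              sum_le_sum (fun v _ => hno v)
      have h4 : ∑ e ∈ E2, e.card = 2 * E2.card := by
        calc ∑ e ∈ E2, e.card = ∑ e ∈ E2, 2 :=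
              sum_congr rfl (fun e he => (mem_filter.mp he).2)
          _ = 2 * E2.card := by rw [sum_const, smul_eq_mul, mul_comm]
      omega
    obtain ⟨v, hv2⟩ := hmin
    set Ev := E2.filter (fun e => v ∈ e) with hEv
    set W := Ev.biUnion (fun e => e.erase v) with hW
    have hWcard : W.card ≤ 2 := by
      calc W.card ≤ ∑ e ∈ Ev, (e.erase v).card := card_biUnion_le
        _ ≤ ∑ _e ∈ Ev, 1 := sum_le_sum (fun e he => by
            have h2 : e.card = 2 := (mem_filter.mp ((mem_filter.mp he).1)).2
            have hve : v ∈ e := (mem_filter.mp he).2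
            rw [card_erase_of_mem hve, h2])
        _ = Ev.card := by rw [sum_const, smul_eq_mul, mul_one]
        _ ≤ 2 := hv2
    have hvW : v ∉ W := by
      intro h
      obtain ⟨e, _, h2⟩ := mem_biUnion.mp h
      exact (mem_erase.mp h2).1 rfl
    have hnb : ∀ y : V, G.Adj v y → y ∈ W := by
      intro y hy
      obtain ⟨e, heE, hve, hye⟩ := hedge_of hy
      have hneq : v ≠ y := hy.ne
      have h2le : 2 ≤ e.card := by
        have hsub : ({v, y} : Finset V) ⊆ e := by
          intro z hz
          rcases mem_insert.mp hz with rfl | hz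
          · exact hve
          · rw [mem_singleton.mp hz]; exact hye
        calc 2 = ({v, y} : Finset V).card := (card_pair hneq).symm
          _ ≤ e.card := card_le_card hsub
      have hecard : e.card = 2 := by
        have := hbig e heE
        omega
      exact mem_biUnion.mpr ⟨e, mem_filter.mpr ⟨mem_filter.mpr ⟨heE, hecard⟩, hve⟩,
        mem_erase.mpr ⟨hneq.symm, hye⟩⟩
    have hbex : ∃ b : V, b ∉ W ∧ b ≠ v := by
      by_contra h
      push_neg at h
      have huniv : (univ : Finset V) ⊆ insert v W := by
        intro x _
        by_cases hx : x ∈ W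
        · exact mem_insert_of_mem hx
        · rw [h x hx]; exact mem_insert_self _ _
      have h5 : Fintype.card V ≤ (insert v W).card := by
        rw [← card_univ]
        exact card_le_card huniv
      have h6 := card_insert_le v W
      omega
    obtain ⟨b, hbW, hbv⟩ := hbex
    refine ⟨W, hWcard, ?_⟩
    intro hc
    have hmv : v ∈ {x : V | x ∉ W} := hvW
    have hmb : b ∈ {x : V | x ∉ W} := hbW
    obtain ⟨w⟩ := hc.preconnected ⟨v, hmv⟩ ⟨b, hmb⟩
    have hcl : ∀ x y : ↥{x : V | x ∉ W}, (↑x = v) →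
        (G.induce {x : V | x ∉ W}).Adj x y → (↑y = v) := by
      intro x y hx hxy
      have hGxy : G.Adj ↑x ↑y := hxy
      rw [hx] at hGxy
      exact absurd (hnb _ hGxy) y.2
    exact hbv (walk_closed hcl w rfl)
end

section
/- Let s ≥ 3 be an integer and let H be an s-uniform hypergraph such that for every set F of hyperedges of H with |F| < 2^{s+1}, the union of the hyperedges in F has size at least (s−1)·|F|. Let G be the 2-section of H. Then for every set X of s+1 vertices of G, the number of edges of G induced on X is at most C(s,2) + 2. -/
lemma two_mul_choose_two (n : ℕ) : 2 * n.choose 2 = n * (n - 1) := by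
  induction n with
  | zero => rfl
  | succ m ih =>
    rw [Nat.choose_succ_succ, Nat.choose_one_right, Nat.mul_add, ih]
    cases m with
    | zero => rfl
    | succ k => simp [Nat.succ_sub_one]; ring

lemma L0 {V : Type*} [Fintype V] [DecidableEq V]
    (E : Finset (Finset V)) (X : Finset V) :
    ((twoSection E).induce (X : Set V)).edgeSet.ncard ≤
      ((X.powersetCard 2).filter (fun p => ∃ e ∈ E, p ⊆ e)).card := by
  classical
  set P := (X.powersetCard 2).filter (fun p => ∃ e ∈ E, p ⊆ e) with hP
  set G := (twoSection E).induce (X : Set V) with hG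
  set φ : Sym2 (X : Set V) → Finset V :=
    Sym2.lift ⟨fun u v => ({u.1, v.1} : Finset V), fun u v => Finset.pair_comm _ _⟩ with hphi
  have hadj : ∀ u v : (X : Set V), G.Adj u v → (u : V) ≠ v ∧ ∃ e ∈ E, (u : V) ∈ e ∧ (v : V) ∈ e := by
    intro u v huv
    have : (twoSection E).Adj u v := huv
    rw [twoSection, SimpleGraph.fromRel_adj] at this
    obtain ⟨hne, h | h⟩ := this
    · exact ⟨hne, h⟩
    · obtain ⟨e, he, h1, h2⟩ := h
      exact ⟨hne, e, he, h2, h1⟩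
  have himg : φ '' G.edgeSet ⊆ ↑P := by
    rintro y ⟨z, hz, rfl⟩
    induction z using Sym2.ind with
    | _ u v =>
      rw [SimpleGraph.mem_edgeSet] at hz
      obtain ⟨hne, e, he, hu, hv⟩ := hadj u v hz
      simp only [hphi, Sym2.lift_mk]
      rw [hP, Finset.mem_coe, Finset.mem_filter, Finset.mem_powersetCard]
      refine ⟨⟨?_, Finset.card_pair hne⟩, e, he, ?_⟩
      · intro x hx
        simp only [Finset.mem_insert, Finset.mem_singleton] at hx
        rcases hx with rfl | rfl
        · exact u.2
        · exact v.2
      · intro x hx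
        simp only [Finset.mem_insert, Finset.mem_singleton] at hx
        rcases hx with rfl | rfl
        · exact hu
        · exact hv
  have hinj : Set.InjOn φ G.edgeSet := by
    rintro z1 h1 z2 h2 heq
    induction z1 using Sym2.ind with
    | _ u v =>
      induction z2 using Sym2.ind with
      | _ u' v' =>
        rw [SimpleGraph.mem_edgeSet] at h1 h2
        obtain ⟨hne, -⟩ := hadj _ _ h1
        obtain ⟨hne', -⟩ := hadj _ _ h2
        simp only [hphi, Sym2.lift_mk] at heq
        rw [Sym2.eq_iff]
        have h1' : (u : V) ∈ ({(u' : V), (v' : V)} : Finset V) := by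
          rw [← heq]; simp
        have h2' : (v : V) ∈ ({(u' : V), (v' : V)} : Finset V) := by
          rw [← heq]; simp
        have h3' : (u' : V) ∈ ({(u : V), (v : V)} : Finset V) := by
          rw [heq]; simp
        simp only [Finset.mem_insert, Finset.mem_singleton] at h1' h2' h3'
        rcases h1' with h1' | h1' <;> rcases h2' with h2' | h2'
        · exact absurd (h1'.trans h2'.symm) hne
        · exact Or.inl ⟨Subtype.ext h1', Subtype.ext h2'⟩
        · exact Or.inr ⟨Subtype.ext h1', Subtype.ext h2'⟩
        · exact absurd (h1'.trans h2'.symm) hne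
  calc G.edgeSet.ncard = (φ '' G.edgeSet).ncard := (Set.ncard_image_of_injOn hinj).symm
    _ ≤ (↑P : Set (Finset V)).ncard := Set.ncard_le_ncard himg (P : Set (Finset V)).toFinite
    _ = P.card := Set.ncard_coe_finset P

theorem stmt3 {V : Type*} [Fintype V] [DecidableEq V] (s : ℕ) (hs : 3 ≤ s)
    (E : Finset (Finset V))
    (huniform : ∀ e ∈ E, e.card = s)
    (hsparse : ∀ F ⊆ E, F.card < 2 ^ (s + 1) → (s - 1) * F.card ≤ (F.biUnion id).card) :
    ∀ X : Finset V, X.card = s + 1 →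
      ((twoSection E).induce (X : Set V)).edgeSet.ncard ≤ s.choose 2 + 2 := by
  intro X hX
  classical
  set P := (X.powersetCard 2).filter (fun p => ∃ e ∈ E, p ⊆ e) with hP
  have hL0 := L0 E X
  rw [← hP] at hL0
  refine hL0.trans ?_
  -- now pure combinatorics: P.card ≤ s.choose 2 + 2
  set F : Finset (Finset V) := E.filter (fun e => 2 ≤ (e ∩ X).card) with hF
  have hFE : F ⊆ E := Finset.filter_subset _ _
  have hsd : ∀ f ∈ F, (f \ X).card + (f ∩ X).card = s := by
    intro f hf
    rw [Finset.card_sdiff_add_card_inter]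
    exact huniform f (hFE hf)
  have h2le : ∀ f ∈ F, 2 ≤ (f ∩ X).card := fun f hf => (Finset.mem_filter.mp hf).2
  have hunion : ∀ F' ⊆ F, ((F'.biUnion id).card : ℕ) ≤ (s + 1) + ∑ f ∈ F', (f \ X).card := by
    intro F' hF'
    calc (F'.biUnion id).card ≤ (X ∪ F'.biUnion (fun f => f \ X)).card := by
          apply Finset.card_le_card
          intro v hv
          simp only [Finset.mem_biUnion, id] at hv
          obtain ⟨f, hf, hvf⟩ := hv
          by_cases hvX : v ∈ X
          · exact Finset.mem_union_left _ hvX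
          · exact Finset.mem_union_right _
              (Finset.mem_biUnion.mpr ⟨f, hf, Finset.mem_sdiff.mpr ⟨hvf, hvX⟩⟩)
      _ ≤ X.card + (F'.biUnion (fun f => f \ X)).card := Finset.card_union_le _ _
      _ ≤ (s + 1) + ∑ f ∈ F', (f \ X).card := by
          rw [hX]
          exact Nat.add_le_add_left Finset.card_biUnion_le _
  have hsmall : ∀ F' ⊆ F, F'.card < 2 ^ (s + 1) → F'.card ≤ s + 1 := by
    intro F' h1 h2
    have hsp := hsparse F' (h1.trans hFE) h2
    have hu := hunion F' h1
    have hbd : ∑ f ∈ F', (f \ X).card ≤ (s - 2) * F'.card := by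
      calc ∑ f ∈ F', (f \ X).card ≤ ∑ _f ∈ F', (s - 2) := by
            apply Finset.sum_le_sum
            intro f hf
            have := hsd f (h1 hf)
            have := h2le f (h1 hf)
            omega
        _ = (s - 2) * F'.card := by rw [Finset.sum_const, smul_eq_mul, Nat.mul_comm]
    have hs1 : (s - 1) * F'.card = (s - 2) * F'.card + F'.card := by
      have h : s - 1 = (s - 2) + 1 := by omega
      rw [h, Nat.add_mul, Nat.one_mul]
    omega
  have hFlt : F.card < 2 ^ (s + 1) := by
    by_contra hge
    push_neg at hge
    obtain ⟨F', hF'sub, hF'card⟩ := Finset.exists_subset_card_eq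
      (show 2 ^ (s + 1) - 1 ≤ F.card by omega)
    have hpow : s + 2 < 2 ^ (s + 1) := by
      have h1 : s < 2 ^ s := Nat.lt_two_pow_self
      have h2 : 2 ^ (s + 1) = 2 * 2 ^ s := by rw [pow_succ]; ring
      omega
    have := hsmall F' hF'sub (by omega)
    omega
  have hkey : ∑ f ∈ F, ((f ∩ X).card - 1) ≤ s + 1 := by
    have hsp := hsparse F hFE hFlt
    have hu := hunion F (subset_refl F)
    have hsum : ∑ f ∈ F, ((f ∩ X).card - 1) + ∑ f ∈ F, (f \ X).card = (s - 1) * F.card := by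
      rw [← Finset.sum_add_distrib]
      calc ∑ f ∈ F, (((f ∩ X).card - 1) + (f \ X).card) = ∑ _f ∈ F, (s - 1) := by
            apply Finset.sum_congr rfl
            intro f hf
            have := hsd f hf
            have := h2le f hf
            omega
        _ = (s - 1) * F.card := by rw [Finset.sum_const, smul_eq_mul, Nat.mul_comm]
    omega
  -- members of P are covered by members of F
  have hPF : ∀ p ∈ P, p ⊆ X ∧ p.card = 2 ∧ ∃ f ∈ F, p ⊆ f ∩ X := by
    intro p hp
    rw [hP, Finset.mem_filter, Finset.mem_powersetCard] at hp
    obtain ⟨⟨hpX, hpc⟩, f, hfE, hpf⟩ := hp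
    have hpfX : p ⊆ f ∩ X := fun x hx => Finset.mem_inter.mpr ⟨hpf hx, hpX hx⟩
    refine ⟨hpX, hpc, f, ?_, hpfX⟩
    rw [hF, Finset.mem_filter]
    exact ⟨hfE, hpc ▸ Finset.card_le_card hpfX⟩
  rcases F.eq_empty_or_nonempty with hFe | hFne
  · have hPe : P = ∅ := by
      apply Finset.eq_empty_of_forall_notMem
      intro p hp
      obtain ⟨-, -, f, hf, -⟩ := hPF p hp
      rw [hFe] at hf
      exact absurd hf (Finset.notMem_empty f)
    simp [hPe]
  obtain ⟨e, heF, hemax⟩ := Finset.exists_max_image F (fun f => (f ∩ X).card) hFne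
  set M := (e ∩ X).card with hM
  have hM2 : 2 ≤ M := h2le e heF
  have hMs : M ≤ s := by
    have : (e ∩ X).card ≤ e.card := Finset.card_le_card (Finset.inter_subset_left)
    rw [huniform e (hFE heF)] at this
    exact this
  by_cases hc : M * (s + 1) ≤ s * (s - 1) + 4
  · -- route B2
    have hPsub : P ⊆ F.biUnion (fun f => (f ∩ X).powersetCard 2) := by
      intro p hp
      obtain ⟨-, hpc, f, hfF, hpf⟩ := hPF p hp
      exact Finset.mem_biUnion.mpr ⟨f, hfF, Finset.mem_powersetCard.mpr ⟨hpf, hpc⟩⟩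
    have h1 : P.card ≤ ∑ f ∈ F, ((f ∩ X).card).choose 2 :=
      le_trans (Finset.card_le_card hPsub) (le_trans Finset.card_biUnion_le
        (le_of_eq (Finset.sum_congr rfl (fun f _ => Finset.card_powersetCard _ _))))
    have h3 : 2 * P.card ≤ M * (s + 1) := by
      calc 2 * P.card ≤ 2 * ∑ f ∈ F, ((f ∩ X).card).choose 2 := Nat.mul_le_mul_left 2 h1
        _ = ∑ f ∈ F, 2 * ((f ∩ X).card).choose 2 := Finset.mul_sum _ _ _
        _ ≤ ∑ f ∈ F, M * ((f ∩ X).card - 1) := by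
            apply Finset.sum_le_sum
            intro f hf
            rw [two_mul_choose_two]
            exact Nat.mul_le_mul_right _ (hemax f hf)
        _ = M * ∑ f ∈ F, ((f ∩ X).card - 1) := (Finset.mul_sum _ _ _).symm
        _ ≤ M * (s + 1) := Nat.mul_le_mul_left M hkey
    have hgoal2 : 2 * (s.choose 2 + 2) = s * (s - 1) + 4 := by
      rw [Nat.mul_add, two_mul_choose_two]
    omega
  · -- route Y
    push_neg at hc
    have hM1 : s - 1 ≤ M := by
      by_contra hlt
      push_neg at hlt
      have hMle : M ≤ s - 2 := by omega
      have h1 : M * (s + 1) ≤ (s - 2) * (s + 1) := Nat.mul_le_mul_right _ hMle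
      have h2 : (s - 2) * (s + 1) + 2 * (s + 1) = s * (s + 1) := by
        rw [← Nat.add_mul]
        congr 1
        omega
      have h3 : s * (s + 1) = s * (s - 1) + 2 * s := by
        rw [Nat.mul_comm 2 s, ← Nat.mul_add]
        congr 1
        omega
      omega
    -- Y route: M = s or M = s - 1 (the latter only when s > 5)
    set Y := X \ e with hY
    have hYcard : Y.card + M = s + 1 := by
      rw [hY, hM, Finset.inter_comm]
      rw [← Finset.card_sdiff_add_card_inter X e] at hX
      omega
    -- pairs at a vertex u ∈ Y
    have hAt : ∀ u ∈ Y, (P.filter (fun p => u ∈ p)).card ≤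
        ∑ f ∈ F.erase e, ((f ∩ X).card - 1) := by
      intro u hu
      rw [hY, Finset.mem_sdiff] at hu
      obtain ⟨huX, hue⟩ := hu
      have hsub : P.filter (fun p => u ∈ p) ⊆
          ((F.erase e).filter (fun f => u ∈ f)).biUnion
            (fun f => ((f ∩ X).erase u).image (fun v => ({u, v} : Finset V))) := by
        intro p hp
        rw [Finset.mem_filter] at hp
        obtain ⟨hpP, hup⟩ := hp
        obtain ⟨hpX, hpc, f, hfF, hpf⟩ := hPF p hpP
        obtain ⟨x, y, hxy, rfl⟩ := Finset.card_eq_two.mp hpc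
        have huf : u ∈ f := (Finset.mem_inter.mp (hpf hup)).1
        have hfe : f ≠ e := by
          intro h
          rw [h] at hpf
          exact hue (Finset.mem_inter.mp (hpf hup)).1
        rw [Finset.mem_biUnion]
        refine ⟨f, Finset.mem_filter.mpr ⟨Finset.mem_erase.mpr ⟨hfe, hfF⟩, huf⟩, ?_⟩
        rw [Finset.mem_image]
        rcases Finset.mem_insert.mp hup with rfl | hu2
        · refine ⟨y, ?_, rfl⟩
          exact Finset.mem_erase.mpr ⟨fun h => hxy h.symm, hpf (by simp)⟩
        · rw [Finset.mem_singleton] at hu2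
          subst hu2
          refine ⟨x, ?_, ?_⟩
          · exact Finset.mem_erase.mpr ⟨fun h => hxy h, hpf (by simp)⟩
          · rw [Finset.pair_comm]
      calc (P.filter (fun p => u ∈ p)).card
          ≤ ∑ f ∈ (F.erase e).filter (fun f => u ∈ f),
              (((f ∩ X).erase u).image (fun v => ({u, v} : Finset V))).card :=
            le_trans (Finset.card_le_card hsub) Finset.card_biUnion_le
        _ ≤ ∑ f ∈ (F.erase e).filter (fun f => u ∈ f), ((f ∩ X).card - 1) := by
            apply Finset.sum_le_sum
            intro f hf
            refine le_trans Finset.card_image_le ?_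
            rw [Finset.card_erase_of_mem]
            exact Finset.mem_inter.mpr ⟨(Finset.mem_filter.mp hf).2, huX⟩
        _ ≤ ∑ f ∈ F.erase e, ((f ∩ X).card - 1) :=
            Finset.sum_le_sum_of_subset (Finset.filter_subset _ _)
    -- the rest-sum R
    set R := ∑ f ∈ F.erase e, ((f ∩ X).card - 1) with hR
    have hRM : R + (M - 1) ≤ s + 1 := by
      have h : ((e ∩ X).card - 1) + ∑ f ∈ F.erase e, ((f ∩ X).card - 1) =
          ∑ f ∈ F, ((f ∩ X).card - 1) :=
        Finset.add_sum_erase F (fun f => ((f ∩ X).card - 1)) heF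
      omega
    -- covering of P
    have hcover : P ⊆ ((e ∩ X).powersetCard 2) ∪
        Y.biUnion (fun u => P.filter (fun p => u ∈ p)) := by
      intro p hp
      obtain ⟨hpX, hpc, f, hfF, hpf⟩ := hPF p hp
      by_cases hpe : p ⊆ e
      · apply Finset.mem_union_left
        exact Finset.mem_powersetCard.mpr
          ⟨fun x hx => Finset.mem_inter.mpr ⟨hpe hx, hpX hx⟩, hpc⟩
      · apply Finset.mem_union_right
        obtain ⟨w, hwp, hwe⟩ := Finset.not_subset.mp hpe
        apply Finset.mem_biUnion.mpr
        exact ⟨w, Finset.mem_sdiff.mpr ⟨hpX hwp, hwe⟩, Finset.mem_filter.mpr ⟨hp, hwp⟩⟩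
    have hPbound : P.card ≤ M.choose 2 + Y.card * R := by
      calc P.card ≤ ((e ∩ X).powersetCard 2).card +
            (Y.biUnion (fun u => P.filter (fun p => u ∈ p))).card :=
            le_trans (Finset.card_le_card hcover) (Finset.card_union_le _ _)
        _ ≤ M.choose 2 + Y.card * R := by
            rw [Finset.card_powersetCard]
            apply Nat.add_le_add_left
            refine le_trans Finset.card_biUnion_le ?_
            calc ∑ u ∈ Y, (P.filter (fun p => u ∈ p)).card ≤ ∑ _u ∈ Y, R :=
                  Finset.sum_le_sum hAt
              _ = Y.card * R := by rw [Finset.sum_const, smul_eq_mul]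
    have hMcase : M = s ∨ M + 1 = s := by omega
    rcases hMcase with hMe | hMe
    · -- M = s : Y.card = 1, R ≤ 2
      have hY1 : Y.card = 1 := by omega
      rw [hMe, hY1] at hPbound
      omega
    · -- M = s - 1 : Y.card = 2, R ≤ 3, and s > 5
      have hY2 : Y.card = 2 := by omega
      have hR3 : R ≤ 3 := by omega
      have hs5 : 4 ≤ M := by
        have h1 : M * (s + 1) = M * s + M := Nat.mul_succ M s
        have h2 : M * s = s * (s - 1) := by
          rw [Nat.mul_comm]
          congr 1
          omega
        omega
      have hchoose : s.choose 2 = M.choose 2 + M := by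
        rw [← hMe, Nat.choose_succ_succ, Nat.choose_one_right, Nat.add_comm]
      rw [hY2] at hPbound
      omega
end

section
/- Let s ≥ 3 and let H be an s-uniform hypergraph satisfying: for every set F of hyperedges with |F| < 2^{s+1}, |⋃_{e∈F} e| ≥ (s−1)|F|. Let X ⊆ V(H) with |X| = s+1, and let H_X be the restriction of H to X (vertex set X, hyperedges {e ∩ X : e ∈ E(H), |e ∩ X| ≥ 2}). Then for every set F of hyperedges of H_X, |⋃_{f∈F} f| ≥ Σ_{f∈F}(|f| − 1). -/
/-!
Lift each trace `f = e ∩ X` to one hyperedge `e` of `H`. There are fewer than `2 ^ (s + 1)`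
traces, since they are nonempty subsets of `X`, so sparsity applies to the lifted family:
`(s - 1) |F| ≤ |⋃ e|`. A vertex of `⋃ e` lies either in `⋃ f` or in some `e \ X`, and
`|e \ X| = s - |f|`, so `∑ (|f| - 1) = (s - 1) |F| - ∑ |e \ X| ≤ |⋃ f|`.
-/

open Finset

namespace Finset

variable {α : Type*}

theorem card_lt_two_pow_card_of_subset_powerset {F : Finset (Finset α)} {X : Finset α}
    (hF : F ⊆ X.powerset) (hempty : ∅ ∉ F) : #F < 2 ^ #X := by
  rw [← card_powerset]
  exact card_lt_card ((ssubset_iff_of_subset hF).2 ⟨∅, mem_powerset.2 (empty_subset X), hempty⟩)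

variable [DecidableEq α]

theorem card_biUnion_le_card_biUnion_inter_add_sum_card_sdiff (G : Finset (Finset α))
    (X : Finset α) : #(G.biUnion id) ≤ #(G.biUnion (· ∩ X)) + ∑ e ∈ G, #(e \ X) := by
  have hsplit : G.biUnion id ⊆ G.biUnion (· ∩ X) ∪ G.biUnion (· \ X) := by
    intro v hv
    obtain ⟨e, he, hve⟩ := mem_biUnion.1 hv
    by_cases hvX : v ∈ X
    · exact mem_union_left _ (mem_biUnion.2 ⟨e, he, mem_inter.2 ⟨hve, hvX⟩⟩)
    · exact mem_union_right _ (mem_biUnion.2 ⟨e, he, mem_sdiff.2 ⟨hve, hvX⟩⟩)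
  calc #(G.biUnion id) ≤ #(G.biUnion (· ∩ X) ∪ G.biUnion (· \ X)) := card_le_card hsplit
    _ ≤ #(G.biUnion (· ∩ X)) + #(G.biUnion (· \ X)) := card_union_le _ _
    _ ≤ #(G.biUnion (· ∩ X)) + ∑ e ∈ G, #(e \ X) := Nat.add_le_add_left card_biUnion_le _

theorem sum_card_inter_sub_one_le_card_biUnion_inter {s : ℕ} (G : Finset (Finset α))
    (X : Finset α) (huniform : ∀ e ∈ G, #e = s) (hmeet : ∀ e ∈ G, (e ∩ X).Nonempty)
    (hsparse : (s - 1) * #G ≤ #(G.biUnion id)) :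
    ∑ e ∈ G, (#(e ∩ X) - 1) ≤ #(G.biUnion (· ∩ X)) := by
  have hsum : ∑ e ∈ G, (#(e ∩ X) - 1) + ∑ e ∈ G, #(e \ X) = (s - 1) * #G := by
    rw [← sum_add_distrib, mul_comm, ← smul_eq_mul, ← sum_const]
    refine sum_congr rfl fun e he => ?_
    have hpos := (hmeet e he).card_pos
    have hsplit := card_sdiff_add_card_inter e X
    have hcard := huniform e he
    omega
  have := card_biUnion_le_card_biUnion_inter_add_sum_card_sdiff G X
  omega

end Finset

theorem stmt4_general {V : Type*} [DecidableEq V] (s : ℕ)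
    (E : Finset (Finset V))
    (huniform : ∀ e ∈ E, e.card = s)
    (hsparse : ∀ F ⊆ E, F.card < 2 ^ (s + 1) → (s - 1) * F.card ≤ (F.biUnion id).card)
    (X : Finset V) (hX : X.card = s + 1) :
    ∀ F ⊆ (E.filter (fun e => 2 ≤ (e ∩ X).card)).image (fun e => e ∩ X),
      ∑ f ∈ F, (f.card - 1) ≤ (F.biUnion id).card := by
  intro F hF
  obtain ⟨G, hGsub, hinj, rfl⟩ :=
    exists_subset_injOn_image_eq_of_surjOn (f := (· ∩ X)) (E.filter fun e => 2 ≤ #(e ∩ X)) F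
      (by rw [Set.SurjOn, ← coe_image]; exact coe_subset.2 hF)
  have hGE : G ⊆ E := fun e he => (mem_filter.1 (hGsub he)).1
  have hmeet : ∀ e ∈ G, 2 ≤ #(e ∩ X) := fun e he => (mem_filter.1 (hGsub he)).2
  have hsmall : #G < 2 ^ (s + 1) := by
    rw [← card_image_of_injOn hinj, ← hX]
    refine card_lt_two_pow_card_of_subset_powerset (fun f hf => ?_) fun hempty => ?_
    · obtain ⟨e, -, rfl⟩ := mem_image.1 hf
      exact mem_powerset.2 inter_subset_right
    · obtain ⟨e, he, hempty⟩ := mem_image.1 hempty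
      simpa [hempty] using hmeet e he
  rw [sum_image hinj, image_biUnion]
  exact sum_card_inter_sub_one_le_card_biUnion_inter G X (fun e he => huniform e (hGE he))
    (fun e he => card_pos.1 (by linarith [hmeet e he])) (hsparse G hGE hsmall)

theorem stmt4 {V : Type*} [Fintype V] [DecidableEq V] (s : ℕ) (hs : 3 ≤ s)
    (E : Finset (Finset V))
    (huniform : ∀ e ∈ E, e.card = s)
    (hsparse : ∀ F ⊆ E, F.card < 2 ^ (s + 1) → (s - 1) * F.card ≤ (F.biUnion id).card)
    (X : Finset V) (hX : X.card = s + 1) :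
    ∀ F ⊆ (E.filter (fun e => 2 ≤ (e ∩ X).card)).image (fun e => e ∩ X),
      ∑ f ∈ F, (f.card - 1) ≤ (F.biUnion id).card :=
  stmt4_general s E huniform hsparse X hX
end

section
/- Let r ≥ 1, set s = r + 3, and let H be an s-uniform hypergraph on n = s(k−1)+1 vertices (for some integer k ≥ 2) such that for every set F of hyperedges with |F| ≤ 2^{s+1}, |⋃_{e∈F} e| ≥ (s−1)|F|. Let G be the complement of the 2-section of H. Then for every set R of at most r edges of G, the graph G − R (G with the edges in R deleted) has no independent set of size s+1, and consequently χ(G − R) ≥ k. -/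
open Finset

lemma pow_aux (n : ℕ) : n * (n + 1) ≤ 2 ^ (n + 1) := by
  induction n with
  | zero => simp
  | succ m ih =>
    rcases Nat.lt_or_ge m 2 with hm | hm
    · interval_cases m <;> norm_num
    · calc (m + 1) * (m + 1 + 1) ≤ 2 * (m * (m + 1)) := by nlinarith
        _ ≤ 2 * 2 ^ (m + 1) := by omega
        _ = 2 ^ (m + 1 + 1) := by ring

lemma key_lemma {V : Type*} [Fintype V] [DecidableEq V] (r : ℕ) (hr : 1 ≤ r)
    (E : Finset (Finset V))
    (huniform : ∀ e ∈ E, e.card = r + 3)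
    (hsparse : ∀ F ⊆ E, F.card ≤ 2 ^ (r + 4) → (r + 2) * F.card ≤ (F.biUnion id).card)
    (R : Finset (Sym2 V)) (hRcard : R.card ≤ r)
    (X : Finset V) (hX : X.card = r + 4)
    (hind : ∀ u ∈ X, ∀ w ∈ X, u ≠ w → ¬ (((twoSection E)ᶜ).deleteEdges ↑R).Adj u w) :
    False := by
  classical
  -- adjacency characterization
  have hG : ∀ u w : V, (((twoSection E)ᶜ).deleteEdges ↑R).Adj u w ↔
      u ≠ w ∧ (¬ ∃ e ∈ E, u ∈ e ∧ w ∈ e) ∧ s(u, w) ∉ R := by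
    intro u w
    simp only [SimpleGraph.deleteEdges_adj, SimpleGraph.compl_adj, twoSection,
      SimpleGraph.fromRel_adj, Finset.mem_coe]
    constructor
    · rintro ⟨⟨hne, h2⟩, h3⟩
      exact ⟨hne, fun h => h2 ⟨hne, Or.inl h⟩, h3⟩
    · rintro ⟨hne, h2, h3⟩
      refine ⟨⟨hne, fun h => ?_⟩, h3⟩
      rcases h with ⟨-, h | h⟩
      · exact h2 h
      · obtain ⟨e, he, h1', h2'⟩ := h; exact h2 ⟨e, he, h2', h1'⟩
  set P : Finset (V × V) := X.offDiag.filter (fun p => ∃ e ∈ E, p.1 ∈ e ∧ p.2 ∈ e) with hPdef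
  have hPsub : P ⊆ X.offDiag := filter_subset _ _
  have hcovR : ∀ p ∈ X.offDiag \ P, s(p.1, p.2) ∈ R := by
    intro p hp
    have hp1 := (mem_sdiff.mp hp).1
    have hp2 := (mem_sdiff.mp hp).2
    have hpo := Finset.mem_offDiag.mp hp1
    have hnc : ¬ ∃ e ∈ E, p.1 ∈ e ∧ p.2 ∈ e := fun h => hp2 (mem_filter.mpr ⟨hp1, h⟩)
    by_contra hnR
    exact hind p.1 hpo.1 p.2 hpo.2.1 hpo.2.2 ((hG p.1 p.2).mpr ⟨hpo.2.2, hnc, hnR⟩)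
  -- |offDiag \ P| ≤ 2 |R|
  have hsdcard : (X.offDiag \ P).card ≤ 2 * R.card := by
    refine Finset.card_le_mul_card_image_of_maps_to hcovR 2 ?_
    intro q hq
    by_cases hne : ({a ∈ X.offDiag \ P | s(a.1, a.2) = q}).Nonempty
    · obtain ⟨p0, hp0⟩ := hne
      have hsub : {a ∈ X.offDiag \ P | s(a.1, a.2) = q} ⊆ {p0, p0.swap} := by
        intro p hp
        have h1 := (mem_filter.mp hp).2
        have h2 := (mem_filter.mp hp0).2
        have h := h1.trans h2.symm
        rw [Sym2.mk_eq_mk_iff] at h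
        simp only [mem_insert, mem_singleton]
        tauto
      calc ({a ∈ X.offDiag \ P | s(a.1, a.2) = q}).card ≤ ({p0, p0.swap} : Finset (V × V)).card :=
            card_le_card hsub
        _ ≤ 2 := card_insert_le _ _ |>.trans (by simp)
    · rw [not_nonempty_iff_eq_empty] at hne
      simp [hne]
  have hod' : X.offDiag.card = r * r + 7 * r + 12 := by
    rw [offDiag_card, hX]
    rw [Nat.sub_eq_iff_eq_add (Nat.le_mul_of_pos_left _ (by omega))]
    ring
  have hsd' : X.offDiag.card ≤ (X.offDiag \ P).card + P.card :=
    card_le_card_sdiff_add_card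
  have hPc : P.card ≤ X.offDiag.card := card_le_card hPsub
  have hPlb : r * r + 5 * r + 12 ≤ P.card := by linarith
  -- choose covering hyperedges
  have hchoice : ∀ p ∈ P, ∃ e, e ∈ E ∧ p.1 ∈ e ∧ p.2 ∈ e := by
    intro p hp
    simpa using (mem_filter.mp hp).2
  choose! f hfE hf1 hf2 using hchoice
  set F := P.image f with hFdef
  have hFE : F ⊆ E := by
    intro e he; obtain ⟨p, hp, rfl⟩ := mem_image.mp he; exact hfE p hp
  have hFcard2 : F.card ≤ 2 ^ (r + 4) := by
    have h1 : F.card ≤ P.card := card_image_le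
    have h2 := pow_aux (r + 3)
    have h3 : (r + 3) * (r + 3 + 1) = r * r + 7 * r + 12 := by ring
    have h4 : r + 3 + 1 = r + 4 := by omega
    rw [h4] at h2
    linarith
  have hsp := hsparse F hFE hFcard2
  have haS : ∀ e ∈ F, (e ∩ X).card ≤ r + 3 := fun e he =>
    le_trans (card_le_card inter_subset_left) (le_of_eq (huniform e (hFE he)))
  have ha2 : ∀ e ∈ F, 2 ≤ (e ∩ X).card := by
    intro e he; obtain ⟨p, hp, rfl⟩ := mem_image.mp he
    have hpo := Finset.mem_offDiag.mp (hPsub hp)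
    have h1 : p.1 ∈ f p ∩ X := mem_inter.mpr ⟨hf1 p hp, hpo.1⟩
    have h2 : p.2 ∈ f p ∩ X := mem_inter.mpr ⟨hf2 p hp, hpo.2.1⟩
    exact Finset.one_lt_card.mpr ⟨p.1, h1, p.2, h2, hpo.2.2⟩
  have hsum1 : ∀ e ∈ F, (e ∩ X).card + (e \ X).card = r + 3 := by
    intro e he; rw [card_inter_add_card_sdiff]; exact huniform e (hFE he)
  have hSA : (∑ e ∈ F, (e ∩ X).card) + (∑ e ∈ F, (e \ X).card) = (r + 3) * F.card := by
    rw [← Finset.sum_add_distrib, Finset.sum_congr rfl hsum1, Finset.sum_const, smul_eq_mul,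
      mul_comm]
  have hUsub : F.biUnion id ⊆ (F.biUnion fun e => e \ X) ∪ X := by
    intro x hx; obtain ⟨e, he, hxe⟩ := mem_biUnion.mp hx
    by_cases hxX : x ∈ X
    · exact mem_union_right _ hxX
    · exact mem_union_left _ (mem_biUnion.mpr ⟨e, he, mem_sdiff.mpr ⟨hxe, hxX⟩⟩)
  have hUcard : (F.biUnion id).card ≤ (∑ e ∈ F, (e \ X).card) + (r + 4) := by
    calc (F.biUnion id).card ≤ ((F.biUnion fun e => e \ X) ∪ X).card := card_le_card hUsub
      _ ≤ (F.biUnion fun e => e \ X).card + X.card := card_union_le _ _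
      _ ≤ _ := add_le_add card_biUnion_le (le_of_eq hX)
  have hlin : (∑ e ∈ F, (e ∩ X).card) + (r + 2) * F.card ≤ (r + 3) * F.card + (r + 4) := by
    linarith
  set SB := ∑ e ∈ F, ((e ∩ X).card - 2) with hSBdef
  have hSBeq : SB + 2 * F.card = ∑ e ∈ F, (e ∩ X).card := by
    rw [hSBdef]
    calc (∑ e ∈ F, ((e ∩ X).card - 2)) + 2 * F.card
        = ∑ e ∈ F, ((e ∩ X).card - 2 + 2) := by
          rw [Finset.sum_add_distrib, Finset.sum_const, smul_eq_mul, mul_comm]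
      _ = ∑ e ∈ F, (e ∩ X).card := by
          refine Finset.sum_congr rfl fun e he => ?_
          have := ha2 e he; omega
  have hBm : SB + F.card ≤ r + 4 := by
    have h1 : (r + 3) * F.card = (r + 2) * F.card + F.card := by ring
    linarith
  have hPbi : P ⊆ F.biUnion (fun e => (e ∩ X).offDiag) := by
    intro p hp
    refine mem_biUnion.mpr ⟨f p, mem_image_of_mem f hp, ?_⟩
    have hpo := Finset.mem_offDiag.mp (hPsub hp)
    exact Finset.mem_offDiag.mpr
      ⟨mem_inter.mpr ⟨hf1 p hp, hpo.1⟩, mem_inter.mpr ⟨hf2 p hp, hpo.2.1⟩, hpo.2.2⟩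
  have hodc : ∀ e ∈ F, ((e ∩ X).offDiag).card =
      ((e ∩ X).card - 2) * ((e ∩ X).card - 2) + 3 * ((e ∩ X).card - 2) + 2 := by
    intro e he
    rw [offDiag_card]
    have h2 := ha2 e he
    obtain ⟨x, hx⟩ : ∃ x, (e ∩ X).card = x + 2 := ⟨(e ∩ X).card - 2, by omega⟩
    rw [hx, Nat.add_sub_cancel,
      Nat.sub_eq_iff_eq_add (Nat.le_mul_of_pos_left _ (by omega))]
    ring
  -- case on F.card
  rcases Nat.lt_or_ge F.card 3 with hm3 | hm3
  · interval_cases hFc : F.card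
    · -- F.card = 0
      have : F = ∅ := card_eq_zero.mp hFc
      rw [this] at hPbi
      simp only [Finset.biUnion_empty, Finset.subset_empty] at hPbi
      rw [hPbi] at hPlb
      simp at hPlb
    · -- F.card = 1
      obtain ⟨e, hFe⟩ := card_eq_one.mp hFc
      have heF : e ∈ F := by rw [hFe]; exact mem_singleton_self e
      have hPle : P.card ≤ ((e ∩ X).offDiag).card := by
        refine card_le_card ?_
        intro p hp
        have := hPbi hp
        rw [hFe] at this
        simpa using this
      obtain ⟨x, hx⟩ : ∃ x, (e ∩ X).card = x + 2 := ⟨(e ∩ X).card - 2, by have := ha2 e heF; omega⟩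
      have hxle : x ≤ r + 1 := by have := haS e heF; omega
      have hodce := hodc e heF
      rw [hx, Nat.add_sub_cancel] at hodce
      have hxx : x * x ≤ (r + 1) * (r + 1) := Nat.mul_le_mul hxle hxle
      have hexp : (r + 1) * (r + 1) = r * r + 2 * r + 1 := by ring
      linarith
    · -- F.card = 2
      obtain ⟨e1, e2, hne, hF2⟩ := card_eq_two.mp hFc
      have he1F : e1 ∈ F := by rw [hF2]; simp
      have he2F : e2 ∈ F := by rw [hF2]; simp
      have hsumF : ∑ e ∈ F, (e ∩ X).card = (e1 ∩ X).card + (e2 ∩ X).card := by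
        rw [hF2, sum_pair hne]
      obtain ⟨x1, hx1⟩ : ∃ x, (e1 ∩ X).card = x + 2 := ⟨(e1 ∩ X).card - 2, by have := ha2 e1 he1F; omega⟩
      obtain ⟨x2, hx2⟩ : ∃ x, (e2 ∩ X).card = x + 2 := ⟨(e2 ∩ X).card - 2, by have := ha2 e2 he2F; omega⟩
      have hx1le : x1 ≤ r + 1 := by have := haS e1 he1F; omega
      have hx2le : x2 ≤ r + 1 := by have := haS e2 he2F; omega
      have ha12 : x1 + x2 ≤ r + 2 := by
        have h1 : (r + 2) * F.card = 2 * r + 4 := by rw [hFc]; ring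
        have h2 : (r + 3) * F.card = 2 * r + 6 := by rw [hFc]; ring
        omega
      have hodc1 := hodc e1 he1F
      have hodc2 := hodc e2 he2F
      rw [hx1, Nat.add_sub_cancel] at hodc1
      rw [hx2, Nat.add_sub_cancel] at hodc2
      have hPb2 : P ⊆ (e1 ∩ X).offDiag ∪ (e2 ∩ X).offDiag := by
        intro p hp
        have := hPbi hp
        rw [hF2] at this
        simp only [mem_biUnion, mem_insert, mem_singleton] at this
        obtain ⟨e, he, hpe⟩ := this
        rcases he with rfl | rfl
        · exact mem_union_left _ hpe
        · exact mem_union_right _ hpe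
      rcases Nat.lt_or_ge (x1 + x2) (r + 2) with hc | hc
      · -- small sum: crude union bound
        have hPle : P.card ≤ ((e1 ∩ X).offDiag).card + ((e2 ∩ X).offDiag).card :=
          le_trans (card_le_card hPb2) (card_union_le _ _)
        have hxx : (x1 + x2) * (x1 + x2) ≤ (r + 1) * (r + 1) :=
          Nat.mul_le_mul (by omega) (by omega)
        have hexp1 : (x1 + x2) * (x1 + x2) = x1 * x1 + 2 * (x1 * x2) + x2 * x2 := by ring
        have hexp2 : (r + 1) * (r + 1) = r * r + 2 * r + 1 := by ring
        have := Nat.zero_le (x1 * x2)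
        linarith
      · -- x1 + x2 = r + 2 : need overlap
        have hceq : x1 + x2 = r + 2 := le_antisymm ha12 hc
        have hx1ge : 1 ≤ x1 := by omega
        have hx2ge : 1 ≤ x2 := by omega
        have hoint : (e1 ∩ X).offDiag ∩ (e2 ∩ X).offDiag = ((e1 ∩ X) ∩ (e2 ∩ X)).offDiag := by
          ext ⟨u, w⟩
          simp only [Finset.mem_inter, Finset.mem_offDiag]
          tauto
        have hunion := card_union_add_card_inter ((e1 ∩ X).offDiag) ((e2 ∩ X).offDiag)
        rw [hoint] at hunion
        have hPle : P.card + (((e1 ∩ X) ∩ (e2 ∩ X)).offDiag).card ≤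
            ((e1 ∩ X).offDiag).card + ((e2 ∩ X).offDiag).card := by
          have := card_le_card hPb2
          omega
        -- o ≥ 2
        have hYU : (e1 ∩ X) ∪ (e2 ∩ X) ⊆ X := union_subset inter_subset_right inter_subset_right
        have hYUcard := card_union_add_card_inter (e1 ∩ X) (e2 ∩ X)
        have hYUle : ((e1 ∩ X) ∪ (e2 ∩ X)).card ≤ r + 4 := by
          have := card_le_card hYU; omega
        have ho2 : 2 ≤ ((e1 ∩ X) ∩ (e2 ∩ X)).card := by omega
        obtain ⟨y, hy⟩ : ∃ y, ((e1 ∩ X) ∩ (e2 ∩ X)).card = y + 2 := ⟨((e1 ∩ X) ∩ (e2 ∩ X)).card - 2, by omega⟩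
        have hoc : (((e1 ∩ X) ∩ (e2 ∩ X)).offDiag).card = y * y + 3 * y + 2 := by
          rw [offDiag_card, hy,
            Nat.sub_eq_iff_eq_add (Nat.le_mul_of_pos_left _ (by omega))]
          ring
        have hx12 : r + 1 ≤ x1 * x2 := by
          obtain ⟨u, hu⟩ : ∃ u, x1 = u + 1 := ⟨x1 - 1, by omega⟩
          obtain ⟨v, hv⟩ : ∃ v, x2 = v + 1 := ⟨x2 - 1, by omega⟩
          have hexp : (u + 1) * (v + 1) = u * v + u + v + 1 := by ring
          have := Nat.zero_le (u * v)
          have huv : u + v = r := by omega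
          rw [hu, hv]
          linarith
        have hsq : (x1 + x2) * (x1 + x2) = x1 * x1 + 2 * (x1 * x2) + x2 * x2 := by ring
        have hsq2 : (x1 + x2) * (x1 + x2) = r * r + 4 * r + 4 := by rw [hceq]; ring
        have hy0 := Nat.zero_le (y * y)
        have hy1 := Nat.zero_le y
        linarith
  · -- F.card ≥ 3
    have hPle : P.card ≤ ∑ e ∈ F, ((e ∩ X).offDiag).card :=
      le_trans (card_le_card hPbi) card_biUnion_le
    have hsum3 : ∑ e ∈ F, ((e ∩ X).offDiag).card =
        (∑ e ∈ F, ((e ∩ X).card - 2) * ((e ∩ X).card - 2)) + 3 * SB + 2 * F.card := by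
      rw [Finset.sum_congr rfl hodc, Finset.sum_add_distrib, Finset.sum_add_distrib,
        Finset.sum_const, smul_eq_mul, mul_comm F.card 2, hSBdef, Finset.mul_sum]
    have hb2 : (∑ e ∈ F, ((e ∩ X).card - 2) * ((e ∩ X).card - 2)) ≤ SB * SB := by
      calc (∑ e ∈ F, ((e ∩ X).card - 2) * ((e ∩ X).card - 2))
          ≤ ∑ e ∈ F, ((e ∩ X).card - 2) * SB := by
            refine sum_le_sum fun e he => Nat.mul_le_mul le_rfl ?_
            exact single_le_sum (f := fun e => (e ∩ X).card - 2) (fun i _ => Nat.zero_le _) he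
        _ = SB * SB := by rw [← sum_mul]
    have hSBle : SB ≤ r + 1 := by omega
    have hxx : SB * SB ≤ (r + 1) * (r + 1) := Nat.mul_le_mul hSBle hSBle
    have hexp : (r + 1) * (r + 1) = r * r + 2 * r + 1 := by ring
    linarith

theorem stmt7 {V : Type*} [Fintype V] [DecidableEq V] (r s k : ℕ) (hr : 1 ≤ r)
    (hsr : s = r + 3) (hk : 2 ≤ k)
    (E : Finset (Finset V))
    (huniform : ∀ e ∈ E, e.card = s)
    (hn : Fintype.card V = s * (k - 1) + 1)
    (hsparse : ∀ F ⊆ E, F.card ≤ 2 ^ (s + 1) → (s - 1) * F.card ≤ (F.biUnion id).card) :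
    ∀ R : Finset (Sym2 V), ↑R ⊆ ((twoSection E)ᶜ).edgeSet → R.card ≤ r →
      (∀ X : Finset V, X.card = s + 1 →
        ¬ (∀ u ∈ X, ∀ w ∈ X, u ≠ w → ¬ (((twoSection E)ᶜ).deleteEdges ↑R).Adj u w)) ∧
      (k : ℕ∞) ≤ (((twoSection E)ᶜ).deleteEdges ↑R).chromaticNumber := by
  classical
  subst hsr
  intro R hR hRcard
  have huniform' : ∀ e ∈ E, e.card = r + 3 := huniform
  have hsparse' : ∀ F ⊆ E, F.card ≤ 2 ^ (r + 4) → (r + 2) * F.card ≤ (F.biUnion id).card := by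
    intro F h1 h2
    have h3 : r + 3 + 1 = r + 4 := by omega
    have h4 : r + 3 - 1 = r + 2 := by omega
    have := hsparse F h1 (by rw [h3]; exact h2)
    rwa [h4] at this
  have key : ∀ X : Finset V, X.card = r + 3 + 1 →
      ¬ (∀ u ∈ X, ∀ w ∈ X, u ≠ w → ¬ (((twoSection E)ᶜ).deleteEdges ↑R).Adj u w) := by
    intro X hX hind
    exact key_lemma r hr E huniform' hsparse' R hRcard X (by omega) hind
  refine ⟨key, ?_⟩
  rw [SimpleGraph.chromaticNumber]
  refine le_iInf₂ fun n hn' => ?_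
  rw [Set.mem_setOf_eq] at hn'
  obtain ⟨C⟩ := hn'
  rw [Nat.cast_le]
  by_contra hnk
  push_neg at hnk
  -- every color class has size ≤ r + 3
  have hfiber : ∀ i : Fin n, ({v ∈ (Finset.univ : Finset V) | C v = i}).card ≤ r + 3 := by
    intro i
    by_contra hbig
    push_neg at hbig
    obtain ⟨X, hXsub, hXcard⟩ := Finset.exists_subset_card_eq (show r + 4 ≤ _ from hbig)
    refine key X (by omega) ?_
    intro u hu w hw hne hadj
    have hu' := (mem_filter.mp (hXsub hu)).2
    have hw' := (mem_filter.mp (hXsub hw)).2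
    exact C.valid hadj (hu'.trans hw'.symm)
  have hcard : Fintype.card V ≤ n * (r + 3) := by
    have h1 : (Finset.univ : Finset V).card = ∑ i : Fin n, ({v ∈ (Finset.univ : Finset V) | C v = i}).card :=
      Finset.card_eq_sum_card_fiberwise (fun v _ => mem_univ (C v))
    have h2 : ∑ i : Fin n, ({v ∈ (Finset.univ : Finset V) | C v = i}).card ≤
        ∑ _i : Fin n, (r + 3) := Finset.sum_le_sum fun i _ => hfiber i
    simp only [Finset.sum_const, Finset.card_univ, Fintype.card_fin, smul_eq_mul] at h2
    rw [← Finset.card_univ]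
    omega
  rw [hn] at hcard
  have hklb : 1 ≤ k - 1 := by omega
  have hnlek : n ≤ k - 1 := by omega
  have : n * (r + 3) ≤ (k - 1) * (r + 3) := Nat.mul_le_mul_right _ hnlek
  have : (r + 3) * (k - 1) ≤ n * (r + 3) := by linarith [hcard]
  nlinarith [this, hcard, Nat.mul_le_mul_right (r + 3) hnlek, hklb]
end

section
/- Let H be a hypergraph, let e₀ ∈ E(H) with |e₀| ≥ 3, and let v ∈ V(H) ∖ e₀. Suppose that for every F ⊆ E(H), |⋃_{e∈F} e| ≥ Σ_{e∈F}(|e|−1). Let C be the connected component containing v in the 2-section of the hypergraph H − e₀ (H with hyperedge e₀ removed). Then |e₀ ∩ C| ≤ 2. -/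
open Finset

lemma SimpleGraph.Reachable.exists_adj_dist_lt {V : Type*} {G : SimpleGraph V} {u v : V}
    (h : G.Reachable v u) (hne : u ≠ v) : ∃ w, G.Adj u w ∧ G.dist v w < G.dist v u := by
  obtain ⟨p, hp⟩ := h.symm.exists_walk_length_eq_dist
  cases p with
  | nil => exact absurd rfl hne
  | cons hadj q =>
    refine ⟨_, hadj, ?_⟩
    rw [G.dist_comm, G.dist_comm (u := v), ← hp]
    exact (SimpleGraph.dist_le q).trans_lt (by simp)

lemma Finset.exists_subset_card_le_sum_card_sub_one {α : Type*} [DecidableEq α]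
    {E : Finset (Finset α)} {s : Finset α} (d : α → ℕ)
    (hs : ∀ u ∈ s, ∃ e ∈ E, u ∈ e ∧ ∃ w ∈ e, d w < d u) :
    ∃ F ⊆ E, (∀ e ∈ F, ∃ u ∈ s, u ∈ e) ∧ #s ≤ ∑ e ∈ F, (#e - 1) := by
  choose! f hfE hf hdesc using hs
  refine ⟨s.image f, image_subset_iff.2 hfE, forall_mem_image.2 fun u hu => ⟨u, hu, hf u hu⟩, ?_⟩
  rw [card_eq_sum_card_image f s]
  refine sum_le_sum fun e he => ?_
  obtain ⟨u₀, hu₀, rfl⟩ := mem_image.1 he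
  obtain ⟨m, hm, hmin⟩ := exists_min_image (f u₀) d ⟨u₀, hf u₀ hu₀⟩
  have hfiber : {u ∈ s | f u = f u₀} ⊆ (f u₀).erase m := by
    intro u hu
    obtain ⟨hus, hfu⟩ := mem_filter.1 hu
    obtain ⟨w, hw, hlt⟩ := hdesc u hus
    rw [hfu] at hw
    exact mem_erase.2 ⟨fun hum => (hmin w hw).not_gt (hum ▸ hlt), hfu ▸ hf u hus⟩
  exact (card_le_card hfiber).trans_eq (card_erase_of_mem hm)

section TwoSection

variable {V : Type*} {E : Finset (Finset V)}

lemma twoSection_adj {u w : V} :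
    (twoSection E).Adj u w ↔ u ≠ w ∧ ∃ e ∈ E, u ∈ e ∧ w ∈ e := by
  simp only [twoSection, SimpleGraph.fromRel_adj]
  grind

lemma twoSection_reachable_of_mem {e : Finset V} (he : e ∈ E) {u w : V} (hu : u ∈ e)
    (hw : w ∈ e) : (twoSection E).Reachable u w := by
  by_cases huw : u = w
  · exact huw ▸ SimpleGraph.Reachable.refl u
  · exact (twoSection_adj.2 ⟨huw, e, he, hu, hw⟩).reachable

lemma twoSection_exists_cover_of_mem_iff_reachable [DecidableEq V] {v : V} {C : Finset V}
    (hC : ∀ u, u ∈ C ↔ (twoSection E).Reachable v u) :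
    ∃ F ⊆ E, F.biUnion id ⊆ C ∧ #C ≤ ∑ e ∈ F, (#e - 1) + 1 := by
  obtain ⟨F, hFE, hFC, hcard⟩ := exists_subset_card_le_sum_card_sub_one
    (s := C.erase v) (fun u => (twoSection E).dist v u) fun u hu => by
      obtain ⟨hne, huC⟩ := mem_erase.1 hu
      obtain ⟨w, hadj, hlt⟩ := ((hC u).1 huC).exists_adj_dist_lt hne
      obtain ⟨e, he, hue, hwe⟩ := (twoSection_adj.1 hadj).2
      exact ⟨e, he, hue, w, hwe, hlt⟩
  refine ⟨F, hFE, fun x hx => ?_, ?_⟩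
  · obtain ⟨e, he, hxe⟩ := mem_biUnion.1 hx
    obtain ⟨u, hu, hue⟩ := hFC e he
    exact (hC x).2 (((hC u).1 (mem_of_mem_erase hu)).trans
      (twoSection_reachable_of_mem (hFE he) hue hxe))
  · have : #C - 1 ≤ #(C.erase v) := pred_card_le_card_erase
    omega

end TwoSection

theorem stmt11_general {V : Type*} [Fintype V] [DecidableEq V] (E : Finset (Finset V))
    (e₀ : Finset V) (he₀ : e₀ ∈ E)
    (v : V)
    (hsparse : ∀ F ⊆ E, ∑ e ∈ F, (e.card - 1) ≤ (F.biUnion id).card) :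
    ((e₀ : Set V) ∩ {u : V | (twoSection (E.erase e₀)).Reachable v u}).ncard ≤ 2 := by
  classical
  set C : Finset V := {u | (twoSection (E.erase e₀)).Reachable v u}
  have hC : ∀ u, u ∈ C ↔ (twoSection (E.erase e₀)).Reachable v u := by simp [C]
  obtain ⟨F, hFE, hFC, hcard⟩ := twoSection_exists_cover_of_mem_iff_reachable hC
  have he₀F : e₀ ∉ F := fun h => by simpa using hFE h
  have hsp := hsparse (insert e₀ F) (insert_subset he₀ (hFE.trans (erase_subset _ _)))
  rw [sum_insert he₀F] at hsp
  have hunion : #((insert e₀ F).biUnion id) ≤ #(e₀ ∪ C) := by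
    rw [biUnion_insert]
    exact card_le_card (union_subset_union subset_rfl hFC)
  have hinter := card_union_add_card_inter e₀ C
  have hinter_le : #(e₀ ∩ C) ≤ #e₀ := card_le_card inter_subset_left
  rw [show (e₀ : Set V) ∩ {u | (twoSection (E.erase e₀)).Reachable v u} = ↑(e₀ ∩ C) by
    ext; simp [hC], Set.ncard_coe_finset]
  omega

theorem stmt11 {V : Type*} [Fintype V] [DecidableEq V] (E : Finset (Finset V))
    (e₀ : Finset V) (he₀ : e₀ ∈ E) (he₀card : 3 ≤ e₀.card)
    (v : V) (hv : v ∉ e₀)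
    (hsparse : ∀ F ⊆ E, ∑ e ∈ F, (e.card - 1) ≤ (F.biUnion id).card) :
    ((e₀ : Set V) ∩ {u : V | (twoSection (E.erase e₀)).Reachable v u}).ncard ≤ 2 :=
  stmt11_general E e₀ he₀ v hsparse
end
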